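/- arXiv:2309.08231 — 3 statements merged into one kernel-verified Lean document; each statement's English description precedes it below -/
import Mathlib

section
/- Let X be a compact metric space, J : X → ℝ and P : X → [0,1] continuous, α ∈ [0,1]. Suppose (μ*(1), μ*(2), x*^{(1)}, x*^{(2)}) with μ*(1), μ*(2) ≥ 0, μ*(1)+μ*(2) = 1, minimizes μ(1)J(x^{(1)}) + μ(2)J(x^{(2)}) subject to μ(1)P(x^{(1)}) + μ(2)P(x^{(2)}) ≥ 1 − α. Set α̃^{(1)} = 1 − P(x*^{(1)}) and α̃^{(2)} = 1 − P(x*^{(2)}), and assume μ*(1) > 0 and μ*(2) > 0. Then x*^{(1)} minimizes J over {x ∈ X : P(x) ≥ 1 − α̃^{(1)}} and x*^{(2)} minimizes J over {x ∈ X : P(x) ≥ 1 − α̃^{(2)}}. -/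
theorem stmt_7 {X : Type*} [MetricSpace X] [CompactSpace X] [Nonempty X]
    (J P : X → ℝ) (hJ : Continuous J) (hP : Continuous P)
    (hP01 : ∀ x, P x ∈ Set.Icc (0:ℝ) 1)
    (α : ℝ) (hα : α ∈ Set.Icc (0:ℝ) 1)
    (μ1 μ2 : ℝ) (x1 x2 : X)
    (hμ1 : 0 < μ1) (hμ2 : 0 < μ2) (hsum : μ1 + μ2 = 1)
    (hfeas : (1 : ℝ) - α ≤ μ1 * P x1 + μ2 * P x2)
    (hopt : ∀ (w1 w2 : ℝ) (y1 y2 : X), 0 ≤ w1 → 0 ≤ w2 → w1 + w2 = 1 →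
      (1 : ℝ) - α ≤ w1 * P y1 + w2 * P y2 →
      μ1 * J x1 + μ2 * J x2 ≤ w1 * J y1 + w2 * J y2) :
    (∀ x, P x1 ≤ P x → J x1 ≤ J x) ∧ (∀ x, P x2 ≤ P x → J x2 ≤ J x) := by
  constructor
  · intro x hx
    have h := hopt μ1 μ2 x x2 hμ1.le hμ2.le hsum
      (hfeas.trans (by nlinarith))
    nlinarith
  · intro x hx
    have h := hopt μ1 μ2 x1 x hμ1.le hμ2.le hsum
      (hfeas.trans (by nlinarith))
    nlinarith
end

section
/- Let X be a compact metric space, J, P continuous with P : X → [0,1], α ∈ [0,1], and for α̃ ∈ [0,1] let J*_{α̃} = min{J(x) : P(x) ≥ 1 − α̃} (attained for all α̃). Suppose (μ(1), μ(2), x^{(1)}, x^{(2)}) is feasible for the two-point problem, i.e., μ(1)P(x^{(1)}) + μ(2)P(x^{(2)}) ≥ 1 − α with μ(1)+μ(2) = 1, μ(i) ≥ 0. If α̃ ↦ J*_{α̃} is convex on [0,1], then μ(1)J(x^{(1)}) + μ(2)J(x^{(2)}) ≥ J*_α. Hence under convexity of J*, randomization gives no improvement: the two-point optimal value equals J*_α.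 -/
theorem stmt_9 {X : Type*} [MetricSpace X] [CompactSpace X] [Nonempty X]
    (J P : X → ℝ) (hJ : Continuous J) (hP : Continuous P)
    (hP01 : ∀ x, P x ∈ Set.Icc (0:ℝ) 1)
    (α : ℝ) (hα : α ∈ Set.Icc (0:ℝ) 1)
    (Jstar : ℝ → ℝ)
    (hatt : ∀ a ∈ Set.Icc (0:ℝ) 1,
      IsLeast (J '' {x : X | (1 : ℝ) - a ≤ P x}) (Jstar a))
    (hconv : ConvexOn ℝ (Set.Icc (0:ℝ) 1) Jstar)
    (μ1 μ2 : ℝ) (x1 x2 : X)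
    (hμ1 : 0 ≤ μ1) (hμ2 : 0 ≤ μ2) (hsum : μ1 + μ2 = 1)
    (hfeas : (1 : ℝ) - α ≤ μ1 * P x1 + μ2 * P x2) :
    Jstar α ≤ μ1 * J x1 + μ2 * J x2 := by
  set a1 := 1 - P x1 with ha1
  set a2 := 1 - P x2 with ha2
  have h1 := hP01 x1
  have h2 := hP01 x2
  have ha1m : a1 ∈ Set.Icc (0:ℝ) 1 := by
    constructor <;> simp only [ha1] <;> linarith [h1.1, h1.2]
  have ha2m : a2 ∈ Set.Icc (0:ℝ) 1 := by
    constructor <;> simp only [ha2] <;> linarith [h2.1, h2.2]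
  have hβm : μ1 * a1 + μ2 * a2 ∈ Set.Icc (0:ℝ) 1 := by
    constructor
    · exact add_nonneg (mul_nonneg hμ1 ha1m.1) (mul_nonneg hμ2 ha2m.1)
    · nlinarith [ha1m.1, ha1m.2, ha2m.1, ha2m.2]
  -- monotonicity: Jstar α ≤ Jstar (μ1*a1 + μ2*a2)
  have hβle : μ1 * a1 + μ2 * a2 ≤ α := by
    simp only [ha1, ha2]; nlinarith
  have hmono : Jstar α ≤ Jstar (μ1 * a1 + μ2 * a2) := by
    have hL1 := hatt α hα
    have hL2 := hatt _ hβm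
    apply hL1.2
    obtain ⟨x, hx, hxe⟩ := hL2.1
    exact ⟨x, by simp only [Set.mem_setOf_eq] at hx ⊢; linarith, hxe⟩
  have hcv := hconv.2 ha1m ha2m hμ1 hμ2 hsum
  have hJ1 : Jstar a1 ≤ J x1 := (hatt _ ha1m).2 ⟨x1, by simp [ha1], rfl⟩
  have hJ2 : Jstar a2 ≤ J x2 := (hatt _ ha2m).2 ⟨x2, by simp [ha2], rfl⟩
  simp only [smul_eq_mul] at hcv
  nlinarith
end

section
/- Let S ∈ ℕ and let (μ_S, x^{(1)},…,x^{(S)}) be an optimal solution of the S-point problem: minimize ∑_i J(x^{(i)}) μ_S(i) over the probability simplex and X^S subject to ∑_i P(x^{(i)}) μ_S(i) ≥ 1 − α, with optimal value 𝒥̃_α(S). Define α̃^{(i)} = 1 − P(x^{(i)}) and ν_S = μ_S. Then (ν_S, α̃^{(1)},…,α̃^{(S)}) is feasible for the violation-level problem (∑_i (1 − α̃^{(i)}) ν_S(i) ≥ 1 − α) and ∑_i J*_{α̃^{(i)}} ν_S(i) = 𝒥̃_α(S). -/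
open Finset

theorem stmt_12 {X : Type*} [MetricSpace X] [CompactSpace X] [Nonempty X]
    (J P : X → ℝ) (hJ : Continuous J) (hP : Continuous P)
    (hP01 : ∀ x, P x ∈ Set.Icc (0:ℝ) 1)
    (α : ℝ) (hα : α ∈ Set.Icc (0:ℝ) 1)
    (Jstar : ℝ → ℝ)
    (hatt : ∀ a ∈ Set.Icc (0:ℝ) 1,
      IsLeast (J '' {x : X | (1 : ℝ) - a ≤ P x}) (Jstar a))
    (S : ℕ) (μS : Fin S → ℝ) (x : Fin S → X)
    (hμ : ∀ i, 0 ≤ μS i) (hμ1 : ∑ i, μS i = 1)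
    (hfeas : (1 : ℝ) - α ≤ ∑ i, P (x i) * μS i)
    (hopt : ∀ (w : Fin S → ℝ) (y : Fin S → X), (∀ i, 0 ≤ w i) → (∑ i, w i = 1) →
      (1 : ℝ) - α ≤ ∑ i, P (y i) * w i →
      (∑ i, J (x i) * μS i) ≤ ∑ i, J (y i) * w i) :
    (1 : ℝ) - α ≤ ∑ i, (1 - (1 - P (x i))) * μS i ∧
    ∑ i, Jstar (1 - P (x i)) * μS i = ∑ i, J (x i) * μS i := by
  have hmem : ∀ i, (1 - P (x i)) ∈ Set.Icc (0:ℝ) 1 := by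
    intro i
    obtain ⟨h0, h1⟩ := hP01 (x i)
    constructor <;> linarith
  constructor
  · simpa using hfeas
  · -- choose attaining points y i
    have hex : ∀ i : Fin S, ∃ y : X, P (x i) ≤ P y ∧ J y = Jstar (1 - P (x i)) := by
      intro i
      obtain ⟨⟨y, hy, hJy⟩, _⟩ := hatt (1 - P (x i)) (hmem i)
      exact ⟨y, by simpa using hy, hJy⟩
    choose y hy hJy using hex
    have hle : ∀ i, Jstar (1 - P (x i)) * μS i ≤ J (x i) * μS i := by
      intro i
      obtain ⟨_, hlb⟩ := hatt (1 - P (x i)) (hmem i)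
      have : Jstar (1 - P (x i)) ≤ J (x i) := hlb ⟨x i, by simp, rfl⟩
      exact mul_le_mul_of_nonneg_right this (hμ i)
    have h1 : ∑ i, Jstar (1 - P (x i)) * μS i ≤ ∑ i, J (x i) * μS i :=
      Finset.sum_le_sum fun i _ => hle i
    have hyfeas : (1 : ℝ) - α ≤ ∑ i, P (y i) * μS i := by
      refine hfeas.trans (Finset.sum_le_sum fun i _ => ?_)
      exact mul_le_mul_of_nonneg_right (hy i) (hμ i)
    have h2 := hopt μS y hμ hμ1 hyfeas
    have : ∑ i, J (y i) * μS i = ∑ i, Jstar (1 - P (x i)) * μS i :=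
      Finset.sum_congr rfl fun i _ => by rw [hJy i]
    linarith
end
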